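/- An nc polynomial q in x, x^T, h, h^T is an nc complex hessian of some nc polynomial if and only if (P1) each monomial of q contains exactly one factor h_j and exactly one factor h_k^T for some j, k, and (P2) whenever a monomial m occurs in q, every monomial Levi-differentially wed to m also occurs in q with the same coefficient. -/

import Mathlib

/-- Variables `x_1,…,x_g` (as `Sum.inl i`) and `x_1ᵀ,…,x_gᵀ` (as `Sum.inr i`). -/
abbrev XV (g : ℕ) := Fin g ⊕ Fin g

/-- Letters: `Sum.inl v` is the variable `x^{i}_{j}`, `Sum.inr v` the direction
variable `h^{i}_{j}`. -/
abbrev LV (g : ℕ) := XV g ⊕ XV g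

/-- `a` is an untransposed `h_j` letter. -/
def isH {g : ℕ} (a : LV g) : Bool := match a with
  | .inr (.inl _) => true
  | _ => false

/-- `a` is a transposed `h_kᵀ` letter. -/
def isHT {g : ℕ} (a : LV g) : Bool := match a with
  | .inr (.inr _) => true
  | _ => false

/-- Forget the `h`-marking of a letter (`h^{i}_{j} ↦ x^{i}_{j}`). -/
def flatL {g : ℕ} : LV g → XV g := Sum.elim id id

/-- The monomial `w` contains exactly one `h_j` and exactly one `h_kᵀ`. -/
def OneHOneHT {g : ℕ} (w : FreeMonoid (LV g)) : Prop :=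
  (FreeMonoid.toList w).countP isH = 1 ∧ (FreeMonoid.toList w).countP isHT = 1

/-- Two monomials, each containing exactly one `h_j` and one `h_kᵀ`, are
Levi-differentially wed: one is obtained from the other by exchanging the `h_j` with
some `x`-variable factor and/or exchanging the `h_kᵀ` with some `xᵀ`-variable factor
(preserving indices); equivalently, they agree after forgetting the `h`-markings. -/
def LeviWed {g : ℕ} (w w' : FreeMonoid (LV g)) : Prop :=
  OneHOneHT w ∧ OneHOneHT w' ∧
    (FreeMonoid.toList w).map flatL = (FreeMonoid.toList w').map flatL

/-- The nc complex hessian of a single monomial (word) `l` in `x, xᵀ`: the sum over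
all pairs of positions `(i, j)` with `l.get i` untransposed and `l.get j` transposed
of the word with those two factors replaced by the corresponding `h`, `hᵀ`. -/
noncomputable def hessWord {g : ℕ} (l : List (XV g)) :
    MonoidAlgebra ℝ (FreeMonoid (LV g)) :=
  ∑ i : Fin l.length, ∑ j : Fin l.length,
    if (l.get i).isLeft = true ∧ (l.get j).isRight = true then
      MonoidAlgebra.single
        (FreeMonoid.ofList (List.ofFn fun m : Fin l.length =>
          if m = i ∨ m = j then (Sum.inr (l.get m) : LV g) else Sum.inl (l.get m))) 1
    else 0

/-- The nc complex hessian
`q(x,xᵀ)[h,hᵀ] = ∂²/∂s∂t p(x+th, y+sk)|_{t=s=0, y=xᵀ, k=hᵀ}` of an nc polynomial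
`p` in `x, xᵀ`, extended linearly from monomials. -/
noncomputable def complexHessianM {g : ℕ}
    (p : MonoidAlgebra ℝ (FreeMonoid (XV g))) : MonoidAlgebra ℝ (FreeMonoid (LV g)) :=
  ∑ l ∈ p.coeff.support, p.coeff l • hessWord (FreeMonoid.toList l)

/-
The monomials of the hessian of a word `l` in `x, xᵀ` are exactly the words obtained from `l` by
marking one `x`-letter as `h` and one `xᵀ`-letter as `hᵀ`, each with coefficient one, since the
marked positions can be read back off the monomial. So the coefficient of `w` in the hessian of
`p` is the coefficient in `p` of the flattening of `w` when `w` has exactly one `h` and one `hᵀ`,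
and zero otherwise; this gives (P1) and (P2). Conversely, under (P1) and (P2) the coefficient of
`w` depends only on its flattening, and `p` is read off from `q` along any choice of a marking of
each word.
-/

theorem List.countP_ofFn {α : Type*} (p : α → Bool) {n : ℕ} (f : Fin n → α) :
    (List.ofFn f).countP p = (Finset.univ.filter fun m => p (f m)).card := by
  induction n with
  | zero => simp
  | succ n ih =>
    rw [List.ofFn_succ, List.countP_cons, ih, Fin.card_filter_univ_succ]
    split_ifs <;> rfl

theorem List.countP_eq_one_iff {α : Type*} {p : α → Bool} {l : List α} :
    l.countP p = 1 ↔ ∃ i < l.length, ∀ m (hm : m < l.length), p l[m] ↔ m = i := by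
  conv_lhs => rw [← List.ofFn_getElem (xs := l)]
  simp only [List.countP_ofFn, Finset.card_eq_one, Finset.ext_iff, Finset.mem_filter,
    Finset.mem_univ, true_and, Finset.mem_singleton, Fin.exists_iff, Fin.forall_iff, Fin.ext_iff,
    exists_prop]

section Marking

variable {g : ℕ}

theorem isH_eq_isRight_and (a : LV g) : isH a = (a.isRight && (flatL a).isLeft) := by
  rcases a with (v | v) | (v | v) <;> rfl

theorem isHT_eq_isRight_and (a : LV g) : isHT a = (a.isRight && (flatL a).isRight) := by
  rcases a with (v | v) | (v | v) <;> rfl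

theorem isRight_eq_isH_or_isHT (a : LV g) : a.isRight = (isH a || isHT a) := by
  rcases a with (v | v) | (v | v) <;> rfl

theorem eq_ite_isRight (a : LV g) : a = if a.isRight then .inr (flatL a) else .inl (flatL a) := by
  rcases a with v | v <;> rfl

def markFn (l : List (XV g)) (i j m : Fin l.length) : LV g :=
  if m = i ∨ m = j then .inr (l.get m) else .inl (l.get m)

def markAt (l : List (XV g)) (i j : Fin l.length) : List (LV g) :=
  List.ofFn (markFn l i j)

theorem map_flatL_markAt (l : List (XV g)) (i j : Fin l.length) :
    (markAt l i j).map flatL = l := by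
  refine List.ext_getElem (by simp [markAt]) fun m _ _ => ?_
  simp only [markAt, markFn, List.getElem_map, List.getElem_ofFn]
  split_ifs <;> rfl

variable {l : List (XV g)} {i j : Fin l.length}

theorem isH_markFn (hi : (l.get i).isLeft) (hj : (l.get j).isRight) (m : Fin l.length) :
    isH (markFn l i j m) ↔ m = i := by
  rw [markFn, isH_eq_isRight_and]
  split_ifs <;> simp [flatL] <;> grind

theorem isHT_markFn (hi : (l.get i).isLeft) (hj : (l.get j).isRight) (m : Fin l.length) :
    isHT (markFn l i j m) ↔ m = j := by
  rw [markFn, isHT_eq_isRight_and]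
  split_ifs <;> simp [flatL] <;> grind

theorem oneHOneHT_markAt (hi : (l.get i).isLeft) (hj : (l.get j).isRight) :
    OneHOneHT (FreeMonoid.ofList (markAt l i j)) := by
  simp [OneHOneHT, markAt, List.countP_ofFn, isH_markFn hi hj, isHT_markFn hi hj,
    Finset.filter_eq']

theorem eq_and_eq_of_markAt_eq (hi : (l.get i).isLeft) (hj : (l.get j).isRight)
    {i' j' : Fin l.length} (hi' : (l.get i').isLeft) (hj' : (l.get j').isRight)
    (h : markAt l i j = markAt l i' j') :
    i = i' ∧ j = j' := by
  have hfn := List.ofFn_injective h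
  constructor
  · rw [← isH_markFn hi' hj', ← hfn, isH_markFn hi hj]
  · rw [← isHT_markFn hi' hj', ← hfn, isHT_markFn hi hj]

theorem exists_markAt_eq (w : List (LV g)) (hw : OneHOneHT (FreeMonoid.ofList w)) :
    ∃ i j : Fin (w.map flatL).length, ((w.map flatL).get i).isLeft ∧
      ((w.map flatL).get j).isRight ∧ markAt (w.map flatL) i j = w := by
  obtain ⟨i, hi, hiH⟩ := (List.countP_eq_one_iff (l := w)).1 hw.1
  obtain ⟨j, hj, hjH⟩ := (List.countP_eq_one_iff (l := w)).1 hw.2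
  refine ⟨⟨i, by simpa⟩, ⟨j, by simpa⟩, ?_, ?_, ?_⟩
  · have hwi := (hiH i hi).2 rfl
    rw [isH_eq_isRight_and, Bool.and_eq_true] at hwi
    simpa using hwi.2
  · have hwj := (hjH j hj).2 rfl
    rw [isHT_eq_isRight_and, Bool.and_eq_true] at hwj
    simpa using hwj.2
  · refine List.ext_getElem (by simp [markAt]) fun m _ hm => ?_
    have hRight : w[m].isRight ↔ m = i ∨ m = j := by
      rw [← hiH m hm, ← hjH m hm, isRight_eq_isH_or_isHT, Bool.or_eq_true]
    rw [eq_ite_isRight w[m]]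
    simp only [markAt, markFn, List.getElem_ofFn, Fin.ext_iff, List.get_eq_getElem,
      List.getElem_map, hRight]

end Marking

section HessWord

variable {g : ℕ}

instance {α : Type*} [DecidableEq α] : DecidableEq (FreeMonoid α) :=
  inferInstanceAs (DecidableEq (List α))

def markings (l : List (XV g)) : Finset (FreeMonoid (LV g)) :=
  (Finset.univ.filter fun ij : Fin l.length × Fin l.length =>
    (l.get ij.1).isLeft ∧ (l.get ij.2).isRight).image
      fun ij => FreeMonoid.ofList (markAt l ij.1 ij.2)

theorem mem_markings {l : List (XV g)} {w : FreeMonoid (LV g)} :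
    w ∈ markings l ↔ OneHOneHT w ∧ (FreeMonoid.toList w).map flatL = l := by
  constructor
  · simp only [markings, Finset.mem_image, Finset.mem_filter, Finset.mem_univ, true_and]
    rintro ⟨⟨i, j⟩, ⟨hi, hj⟩, rfl⟩
    exact ⟨oneHOneHT_markAt hi hj, map_flatL_markAt l i j⟩
  · rintro ⟨hw, rfl⟩
    obtain ⟨i, j, hi, hj, hw'⟩ := exists_markAt_eq (FreeMonoid.toList w) hw
    refine Finset.mem_image.2 ⟨(i, j), ?_, congrArg FreeMonoid.ofList hw'⟩
    exact Finset.mem_filter.2 ⟨Finset.mem_univ _, hi, hj⟩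

theorem hessWord_eq_sum_markings (l : List (XV g)) :
    hessWord l = ∑ w ∈ markings l, MonoidAlgebra.single w 1 := by
  rw [markings, Finset.sum_image, Finset.sum_filter, ← Finset.univ_product_univ,
    Finset.sum_product]
  · rfl
  · rintro ⟨i, j⟩ hij ⟨i', j'⟩ hij' h
    simp only [Finset.coe_filter, Finset.mem_univ, true_and, Set.mem_ofPred_eq] at hij hij'
    obtain ⟨rfl, rfl⟩ :=
      eq_and_eq_of_markAt_eq hij.1 hij.2 hij'.1 hij'.2 (FreeMonoid.ofList.injective h)
    rfl

open Classical in
theorem coeff_hessWord (l : List (XV g)) (w : FreeMonoid (LV g)) :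
    (hessWord l).coeff w =
      if OneHOneHT w ∧ (FreeMonoid.toList w).map flatL = l then 1 else 0 := by
  simp only [hessWord_eq_sum_markings, MonoidAlgebra.coeff_sum, Finsupp.finsetSum_apply,
    MonoidAlgebra.coeff_single, Finsupp.single_apply, Finset.sum_ite_eq', mem_markings]

end HessWord

open Classical in
theorem coeff_complexHessianM {g : ℕ} (p : MonoidAlgebra ℝ (FreeMonoid (XV g)))
    (w : FreeMonoid (LV g)) :
    (complexHessianM p).coeff w =
      if OneHOneHT w then p.coeff (FreeMonoid.map flatL w) else 0 := by
  simp only [complexHessianM, MonoidAlgebra.coeff_sum, Finsupp.finsetSum_apply,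
    MonoidAlgebra.coeff_smul_apply, coeff_hessWord, smul_eq_mul, mul_ite, mul_one, mul_zero]
  split_ifs with hw
  · simp only [hw, true_and, ← FreeMonoid.toList_map, FreeMonoid.toList.apply_eq_iff_eq]
    rw [Finset.sum_ite_eq, Finsupp.if_mem_support]
  · simp [hw]

section Witness

variable {g : ℕ}

theorem LeviWed.symm {w w' : FreeMonoid (LV g)} (h : LeviWed w w') : LeviWed w' w :=
  ⟨h.2.1, h.1, h.2.2.symm⟩

theorem coeff_eq_of_leviWed {R : Type*} [Semiring R] {q : MonoidAlgebra R (FreeMonoid (LV g))}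
    (hq : ∀ w ∈ q.coeff.support, ∀ w', LeviWed w w' → q.coeff w' = q.coeff w)
    {w w' : FreeMonoid (LV g)} (h : LeviWed w w') : q.coeff w' = q.coeff w := by
  by_cases hw : w ∈ q.coeff.support
  · exact hq w hw w' h
  by_cases hw' : w' ∈ q.coeff.support
  · exact (hq w' hw' w h.symm).symm
  rw [Finsupp.notMem_support_iff.1 hw, Finsupp.notMem_support_iff.1 hw']

/- The fallback `map Sum.inl u` only serves to make `someMarking` a section of `map flatL`,
hence injective. -/
open Classical in
noncomputable def someMarking (u : FreeMonoid (XV g)) : FreeMonoid (LV g) :=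
  if h : ∃ w, OneHOneHT w ∧ FreeMonoid.map flatL w = u then h.choose
  else FreeMonoid.map Sum.inl u

theorem map_flatL_someMarking (u : FreeMonoid (XV g)) :
    FreeMonoid.map flatL (someMarking u) = u := by
  rw [someMarking]
  split_ifs with h
  · exact h.choose_spec.2
  · rw [FreeMonoid.map_map]
    exact FreeMonoid.toList.injective (List.map_id _)

theorem someMarking_injective : Function.Injective (someMarking (g := g)) :=
  Function.LeftInverse.injective map_flatL_someMarking

theorem leviWed_someMarking {w : FreeMonoid (LV g)} (hw : OneHOneHT w) :
    LeviWed w (someMarking (FreeMonoid.map flatL w)) := by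
  have h : ∃ w', OneHOneHT w' ∧ FreeMonoid.map flatL w' = FreeMonoid.map flatL w :=
    ⟨w, hw, rfl⟩
  rw [someMarking, dif_pos h]
  exact ⟨hw, h.choose_spec.1, congrArg FreeMonoid.toList h.choose_spec.2.symm⟩

end Witness

/-- `q` is an nc complex hessian of some nc polynomial iff
(P1) each monomial of `q` contains exactly one `h_j` and exactly one `h_kᵀ`, and
(P2) whenever a monomial occurs in `q`, every monomial Levi-differentially wed to it
also occurs in `q` with the same coefficient. -/
theorem isComplexHessian_iff {g : ℕ} (q : MonoidAlgebra ℝ (FreeMonoid (LV g))) :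
    ((∀ w ∈ q.coeff.support, OneHOneHT w) ∧
      (∀ w ∈ q.coeff.support, ∀ w', LeviWed w w' → q.coeff w' = q.coeff w))
      ↔ ∃ p : MonoidAlgebra ℝ (FreeMonoid (XV g)), q = complexHessianM p := by
  constructor
  · rintro ⟨hP1, hP2⟩
    refine ⟨.ofCoeff (q.coeff.comapDomain someMarking someMarking_injective.injOn), ?_⟩
    ext w
    rw [coeff_complexHessianM]
    split_ifs with hw
    · rw [MonoidAlgebra.coeff_ofCoeff, Finsupp.comapDomain_apply,
        coeff_eq_of_leviWed hP2 (leviWed_someMarking hw)]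
    · by_contra h
      exact hw (hP1 w (Finsupp.mem_support_iff.2 h))
  · rintro ⟨p, rfl⟩
    refine ⟨fun w hw => ?_, fun w _ w' ⟨hw, hw', hflat⟩ => ?_⟩
    · by_contra h
      exact Finsupp.mem_support_iff.1 hw (by rw [coeff_complexHessianM, if_neg h])
    · rw [coeff_complexHessianM, coeff_complexHessianM, if_pos hw, if_pos hw']
      exact congrArg p.coeff (FreeMonoid.toList.injective hflat.symm)
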